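/- Let n ≥ 3, let ℓ, m ∈ ℝⁿ be null vectors with ℓᵀηm = 1, let α ≠ 0, and let R be the symmetric matrix R = α((ηℓ)(ηℓ)ᵀ − (ηm)(ηm)ᵀ) (i.e., R_{ab} = α(ℓ_aℓ_b − m_am_b), the canonical purely magnetic Ricci tensor with respect to u = (ℓ−m)/√2). Then: (i) there exists a null vector v with vᵀRv = 0 (R possesses singly aligned null directions, so R is not of alignment type G); and (ii) there is no null vector v with Rv ∈ ℝ·(ηv) (R has no null eigendirection, so alignment types II and D are excluded). Consequently R is of alignment type I_i. -/
import Mathlib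


open Matrix

noncomputable section

/-- The Minkowski metric `η = diag(-1, 1, …, 1)` on `ℝⁿ`. -/
def eta (n : ℕ) : Matrix (Fin n) (Fin n) ℝ :=
  Matrix.diagonal fun i => if i.val = 0 then (-1 : ℝ) else 1

/-- A null vector: nonzero with `vᵀηv = 0`. -/
def IsNull {n : ℕ} (v : Fin n → ℝ) : Prop :=
  v ≠ 0 ∧ v ⬝ᵥ (eta n).mulVec v = 0

lemma etaQ {n : ℕ} (v w : Fin n → ℝ) :
    v ⬝ᵥ (eta n).mulVec w = ∑ i : Fin n, (if (i : ℕ) = 0 then (-1:ℝ) else 1) * (v i * w i) := by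
  simp only [eta, dotProduct, mulVec_diagonal]
  exact Finset.sum_congr rfl fun i _ => by ring

lemma etaQ_symm {n : ℕ} (v w : Fin n → ℝ) :
    v ⬝ᵥ (eta n).mulVec w = w ⬝ᵥ (eta n).mulVec v := by
  rw [etaQ, etaQ]; exact Finset.sum_congr rfl fun i _ => by ring

lemma etaQ_split {n : ℕ} (hn : 0 < n) (v w : Fin n → ℝ) :
    v ⬝ᵥ (eta n).mulVec w
      = (∑ i ∈ Finset.univ.erase ⟨0, hn⟩, v i * w i) - v ⟨0, hn⟩ * w ⟨0, hn⟩ := by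
  rw [etaQ, ← Finset.add_sum_erase Finset.univ _ (Finset.mem_univ (⟨0, hn⟩ : Fin n))]
  have h1 : ∀ i ∈ Finset.univ.erase (⟨0, hn⟩ : Fin n),
      (if (i : ℕ) = 0 then (-1:ℝ) else 1) * (v i * w i) = v i * w i := by
    intro i hi
    have : (i : ℕ) ≠ 0 := fun h => (Finset.mem_erase.1 hi).1 (Fin.ext h)
    simp [this]
  rw [Finset.sum_congr rfl h1]
  simp; ring

/-- A nonzero vector η-orthogonal to a timelike vector is spacelike. -/
lemma spacelike_of_orth {n : ℕ} (hn : 0 < n) (u w : Fin n → ℝ)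
    (hu : u ⬝ᵥ (eta n).mulVec u < 0) (huw : u ⬝ᵥ (eta n).mulVec w = 0) (hw : w ≠ 0) :
    0 < w ⬝ᵥ (eta n).mulVec w := by
  set z : Fin n := ⟨0, hn⟩
  set s := Finset.univ.erase z with hs
  rw [etaQ_split hn] at hu huw ⊢
  set A := ∑ i ∈ s, u i * u i with hA
  set B := ∑ i ∈ s, w i * w i with hB
  set C := ∑ i ∈ s, u i * w i with hC
  have hA0 : 0 ≤ A := Finset.sum_nonneg fun i _ => mul_self_nonneg _
  have hB0 : 0 ≤ B := Finset.sum_nonneg fun i _ => mul_self_nonneg _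
  have hu0 : A < u z * u z := by linarith
  have huz : u z ≠ 0 := by
    intro h; rw [h] at hu0; nlinarith
  have hCS : C ^ 2 ≤ A * B := by
    have := Finset.sum_mul_sq_le_sq_mul_sq s u w
    calc C ^ 2 ≤ (∑ i ∈ s, u i ^ 2) * ∑ i ∈ s, w i ^ 2 := this
      _ = A * B := by rw [hA, hB]; congr 1 <;> exact Finset.sum_congr rfl fun i _ => (sq _)
  rcases eq_or_lt_of_le hB0 with hB0' | hBpos
  · -- B = 0 ⇒ w vanishes off 0, and then w 0 = 0, contradiction
    exfalso
    have hwz : ∀ i ∈ s, w i = 0 := by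
      intro i hi
      have := Finset.sum_eq_zero_iff_of_nonneg (fun i (_ : i ∈ s) => mul_self_nonneg (w i))
      have h2 := (this.1 hB0'.symm) i hi
      exact mul_self_eq_zero.1 h2
    have hC0 : C = 0 := Finset.sum_eq_zero fun i hi => by rw [hwz i hi]; ring
    have hwz0 : w z = 0 := by
      have h3 : u z * w z = 0 := by rw [hC0] at huw; linarith
      rcases mul_eq_zero.1 h3 with h | h
      · exact absurd h huz
      · exact h
    apply hw; funext i
    by_cases h : i = z
    · rw [h, hwz0]; rfl
    · exact hwz i (Finset.mem_erase.2 ⟨h, Finset.mem_univ i⟩)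
  · -- B > 0: (u z * w z)^2 = C^2 ≤ A B < (u z)^2 B
    have hCw : C = u z * w z := by linarith
    have h1 : (u z * w z) ^ 2 ≤ A * B := by rw [← hCw]; exact hCS
    have h2 : A * B < (u z * u z) * B := by
      exact mul_lt_mul_of_pos_right hu0 hBpos
    nlinarith [sq_nonneg (u z), sq_nonneg (w z)]

/-- Existence of a nonzero vector orthogonal to two given vectors, for n ≥ 3. -/
lemma exists_orth {n : ℕ} (hn : 3 ≤ n) (a b : Fin n → ℝ) :
    ∃ w : Fin n → ℝ, w ≠ 0 ∧ a ⬝ᵥ w = 0 ∧ b ⬝ᵥ w = 0 := by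
  let f : (Fin n → ℝ) →ₗ[ℝ] ℝ × ℝ :=
    { toFun := fun w => (a ⬝ᵥ w, b ⬝ᵥ w)
      map_add' := fun x y => by simp [dotProduct_add]
      map_smul' := fun c x => by simp [dotProduct_smul, Prod.smul_mk]
    }
  by_contra h
  push_neg at h
  have hinj : Function.Injective f := by
    rw [← LinearMap.ker_eq_bot, LinearMap.ker_eq_bot']
    intro w hw
    by_contra hw0
    have h1 : a ⬝ᵥ w = 0 := congrArg Prod.fst hw
    have h2 : b ⬝ᵥ w = 0 := congrArg Prod.snd hw
    exact h w hw0 h1 h2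
  have := LinearMap.finrank_le_finrank_of_injective hinj
  simp [Module.finrank_pi, Module.finrank_prod, Module.finrank_self] at this
  omega


-- bilinearity helpers
lemma etaQ_comb_left {n : ℕ} (x y v : Fin n → ℝ) (p q : ℝ) :
    (p • x + q • y) ⬝ᵥ (eta n).mulVec v
      = p * (x ⬝ᵥ (eta n).mulVec v) + q * (y ⬝ᵥ (eta n).mulVec v) := by
  simp [add_dotProduct, smul_dotProduct, smul_eq_mul]

lemma etaQ_comb_right {n : ℕ} (v x y : Fin n → ℝ) (p q : ℝ) :
    v ⬝ᵥ (eta n).mulVec (p • x + q • y)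
      = p * (v ⬝ᵥ (eta n).mulVec x) + q * (v ⬝ᵥ (eta n).mulVec y) := by
  rw [etaQ_symm, etaQ_comb_left, etaQ_symm x v, etaQ_symm y v]

lemma etaQ_comb {n : ℕ} (x y : Fin n → ℝ) (p q p' q' : ℝ) :
    (p • x + q • y) ⬝ᵥ (eta n).mulVec (p' • x + q' • y)
      = p * p' * (x ⬝ᵥ (eta n).mulVec x) + (p * q' + q * p') * (x ⬝ᵥ (eta n).mulVec y)
        + q * q' * (y ⬝ᵥ (eta n).mulVec y) := by
  rw [etaQ_comb_left, etaQ_comb_right, etaQ_comb_right, etaQ_symm y x]; ring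

lemma vecMulVec_mulVec' {n : ℕ} (x y v : Fin n → ℝ) :
    (vecMulVec x y).mulVec v = (y ⬝ᵥ v) • x := by
  funext i
  simp only [mulVec, vecMulVec_apply, dotProduct, Pi.smul_apply, smul_eq_mul, Finset.sum_mul]
  exact Finset.sum_congr rfl fun j _ => by ring

lemma eta_dot {n : ℕ} (x v : Fin n → ℝ) :
    (eta n).mulVec x ⬝ᵥ v = x ⬝ᵥ (eta n).mulVec v := by
  rw [dotProduct_comm, etaQ_symm]

lemma eta_mul_eta {n : ℕ} : (eta n) * (eta n) = 1 := by
  rw [eta, diagonal_mul_diagonal]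
  convert Matrix.diagonal_one with i
  by_cases h : (i : ℕ) = 0 <;> simp [h]

/-- The canonical purely magnetic Ricci tensor `R_{ab} = α(ℓ_a ℓ_b - m_a m_b)` (with
`ℓ, m` null, `ℓᵀηm = 1`, `α ≠ 0`) possesses singly aligned null directions (so it is
not of alignment type G) but has no null eigendirection (so types II and D are
excluded); hence it is of alignment type Iᵢ. -/
theorem stmt19 {n : ℕ} (hn : 3 ≤ n)
    (l m : Fin n → ℝ) (hl : IsNull l) (hm : IsNull m)
    (hlm : l ⬝ᵥ (eta n).mulVec m = 1)
    (α : ℝ) (hα : α ≠ 0)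
    (R : Matrix (Fin n) (Fin n) ℝ)
    (hRdef : R = α • (vecMulVec ((eta n).mulVec l) ((eta n).mulVec l)
        - vecMulVec ((eta n).mulVec m) ((eta n).mulVec m))) :
    (∃ v : Fin n → ℝ, IsNull v ∧ v ⬝ᵥ R.mulVec v = 0) ∧
    ¬ (∃ v : Fin n → ℝ, IsNull v ∧ ∃ c : ℝ, R.mulVec v = c • ((eta n).mulVec v)) := by
  have hn0 : 0 < n := by omega
  have hml : m ⬝ᵥ (eta n).mulVec l = 1 := by rw [etaQ_symm]; exact hlm
  have hll := hl.2
  have hmm := hm.2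
  -- R applied: v ⬝ᵥ R.mulVec v = α * ((l ⬝ᵥ η v)^2 - (m ⬝ᵥ η v)^2)
  have hRquad : ∀ v : Fin n → ℝ, v ⬝ᵥ R.mulVec v
      = α * ((l ⬝ᵥ (eta n).mulVec v) ^ 2 - (m ⬝ᵥ (eta n).mulVec v) ^ 2) := by
    intro v
    rw [hRdef, smul_mulVec, sub_mulVec, dotProduct_smul, smul_eq_mul]
    congr 1
    rw [dotProduct_sub, vecMulVec_mulVec', vecMulVec_mulVec',
        dotProduct_smul, dotProduct_smul, smul_eq_mul, smul_eq_mul,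
        eta_dot l v, eta_dot m v, dotProduct_comm v ((eta n).mulVec l),
        dotProduct_comm v ((eta n).mulVec m), eta_dot l v, eta_dot m v]
    ring
  -- R.mulVec v = (α * a) • η l - (α * b) • η m   where a = l⬝ηv, b = m⬝ηv
  have hRmul : ∀ v : Fin n → ℝ, R.mulVec v
      = (α * (l ⬝ᵥ (eta n).mulVec v)) • (eta n).mulVec l
        - (α * (m ⬝ᵥ (eta n).mulVec v)) • (eta n).mulVec m := by
    intro v
    rw [hRdef, smul_mulVec, sub_mulVec, vecMulVec_mulVec', vecMulVec_mulVec',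
        eta_dot l v, eta_dot m v, smul_sub, smul_smul, smul_smul]
  constructor
  · -- Part (i)
    obtain ⟨w, hw0, hwl, hwm⟩ := exists_orth hn ((eta n).mulVec l) ((eta n).mulVec m)
    have hlw : l ⬝ᵥ (eta n).mulVec w = 0 := by rw [← etaQ_symm, ← dotProduct_comm]; exact hwl
    have hmw : m ⬝ᵥ (eta n).mulVec w = 0 := by rw [← etaQ_symm, ← dotProduct_comm]; exact hwm
    have hwl' : w ⬝ᵥ (eta n).mulVec l = 0 := by rw [etaQ_symm]; exact hlw
    have hwm' : w ⬝ᵥ (eta n).mulVec m = 0 := by rw [etaQ_symm]; exact hmw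
    set u : Fin n → ℝ := l - m with hu
    have hue : u = (1:ℝ) • l + (-1:ℝ) • m := by rw [hu]; funext i; simp [sub_eq_add_neg]
    have huu : u ⬝ᵥ (eta n).mulVec u = -2 := by
      rw [hue, etaQ_comb, hll, hmm, hlm]; ring
    have huw : u ⬝ᵥ (eta n).mulVec w = 0 := by
      rw [hue, etaQ_comb_left, hlw, hmw]; ring
    have hlu : l ⬝ᵥ (eta n).mulVec u = -1 := by
      rw [hue, etaQ_comb_right, hll, hlm]; ring
    have hmu : m ⬝ᵥ (eta n).mulVec u = 1 := by
      rw [hue, etaQ_comb_right, hml, hmm]; ring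
    have hWpos : 0 < w ⬝ᵥ (eta n).mulVec w := spacelike_of_orth hn0 u w (by rw [huu]; norm_num) huw hw0
    set W : ℝ := w ⬝ᵥ (eta n).mulVec w with hW
    set t : ℝ := Real.sqrt (2 / W) with ht
    have ht2 : t ^ 2 = 2 / W := Real.sq_sqrt (by positivity)
    set v : Fin n → ℝ := u + t • w with hv
    have hvu : v = (1:ℝ) • u + t • w := by rw [hv]; funext i; simp
    have hlv : l ⬝ᵥ (eta n).mulVec v = -1 := by
      rw [hvu, etaQ_comb_right, hlu, hlw]; ring
    have hmv : m ⬝ᵥ (eta n).mulVec v = 1 := by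
      rw [hvu, etaQ_comb_right, hmu, hmw]; ring
    have hvnull : v ⬝ᵥ (eta n).mulVec v = 0 := by
      rw [hvu, etaQ_comb, huu, huw, ← hW]
      have : t ^ 2 * W = 2 := by rw [ht2]; field_simp
      nlinarith [this]
    have hv0 : v ≠ 0 := by
      intro h
      rw [h] at hlv
      simp [Matrix.mulVec_zero] at hlv
    exact ⟨v, ⟨hv0, hvnull⟩, by rw [hRquad, hlv, hmv]; ring⟩
  · -- Part (ii)
    rintro ⟨v, ⟨hv0, hvnull⟩, c, hc⟩
    set a : ℝ := l ⬝ᵥ (eta n).mulVec v with ha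
    set b : ℝ := m ⬝ᵥ (eta n).mulVec v with hb
    -- apply η to the eigen-equation
    have key : (α * a) • l - (α * b) • m = c • v := by
      have h1 := congrArg (fun x => (eta n).mulVec x) ((hRmul v).symm.trans hc)
      simp only [mulVec_sub, Matrix.mulVec_smul, mulVec_mulVec, eta_mul_eta, one_mulVec] at h1
      exact h1
    have key' : (α * a) • l + (-(α * b)) • m = c • v := by
      rw [← key]; funext i; simp; ring
    -- pair with l and m
    have e1 : -(α * b) = c * a := by
      have h2 := congrArg (fun x => x ⬝ᵥ (eta n).mulVec l) key'
      simp only [etaQ_comb_left, smul_dotProduct, smul_eq_mul] at h2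
      rw [hll, hml] at h2
      rw [← ha] at *
      have : c * (v ⬝ᵥ (eta n).mulVec l) = c * a := by rw [ha, etaQ_symm]
      rw [this] at h2
      linarith
    have e2 : α * a = c * b := by
      have h2 := congrArg (fun x => x ⬝ᵥ (eta n).mulVec m) key'
      simp only [etaQ_comb_left, smul_dotProduct, smul_eq_mul] at h2
      rw [hlm, hmm] at h2
      have : c * (v ⬝ᵥ (eta n).mulVec m) = c * b := by rw [hb, etaQ_symm]
      rw [this] at h2
      linarith
    have e3 : α ^ 2 * (a * b) = 0 := by
      have h2 := congrArg (fun x => x ⬝ᵥ (eta n).mulVec x) (key'.trans rfl)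
      have hLHS : ((α * a) • l + (-(α * b)) • m) ⬝ᵥ
          (eta n).mulVec ((α * a) • l + (-(α * b)) • m) = -2 * (α ^ 2 * (a * b)) := by
        rw [etaQ_comb, hll, hmm, hlm]; ring
      have hRHS : (c • v) ⬝ᵥ (eta n).mulVec (c • v) = 0 := by
        rw [Matrix.mulVec_smul, dotProduct_smul, smul_dotProduct, hvnull]; simp
      rw [key'] at hLHS
      rw [hRHS] at hLHS
      linarith
    have hab : a * b = 0 := by
      have h := pow_ne_zero 2 hα
      exact (mul_eq_zero.1 e3).resolve_left h
    have ha0 : a = 0 ∧ b = 0 := by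
      rcases mul_eq_zero.1 hab with h | h
      · refine ⟨h, ?_⟩
        have : α * b = 0 := by rw [h] at e1; linarith
        exact (mul_eq_zero.1 this).resolve_left hα
      · refine ⟨?_, h⟩
        have : α * a = 0 := by rw [h] at e2; linarith
        exact (mul_eq_zero.1 this).resolve_left hα
    -- v is null and orthogonal to the timelike vector l - m : contradiction
    set u : Fin n → ℝ := l - m with hu
    have hue : u = (1:ℝ) • l + (-1:ℝ) • m := by rw [hu]; funext i; simp [sub_eq_add_neg]
    have huu : u ⬝ᵥ (eta n).mulVec u = -2 := by
      rw [hue, etaQ_comb, hll, hmm, hlm]; ring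
    have huv : u ⬝ᵥ (eta n).mulVec v = 0 := by
      rw [hue, etaQ_comb_left, ← ha, ← hb, ha0.1, ha0.2]; ring
    have := spacelike_of_orth hn0 u v (by rw [huu]; norm_num) huv hv0
    rw [hvnull] at this
    exact lt_irrefl 0 this

end
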